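/- Robust recursive feasibility with a robust-control-invariant terminal set: if x₀ is robustly feasible over horizon T (with T ≥ 1) via policies π_0, …, π_{T−1}, then for every disturbance realization w̄ ∈ 𝒲 the successor state x₁ := A x₀ + B π_0 + w̄ is robustly feasible over horizon T. -/
import Mathlib


open Matrix Set

/-- Trajectory `x_{t+1} = A x_t + B π_t(w_0, …, w_{t-1}) + w_t` generated by a
causal disturbance-feedback policy `π`, starting from `x0`. -/
noncomputable def polTraj {n p : ℕ} (A : Matrix (Fin n) (Fin n) ℝ)
    (B : Matrix (Fin n) (Fin p) ℝ)
    (π : (t : ℕ) → (Fin t → (Fin n → ℝ)) → (Fin p → ℝ))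
    (x0 : Fin n → ℝ) (w : ℕ → Fin n → ℝ) : ℕ → Fin n → ℝ
  | 0 => x0
  | t + 1 => A.mulVec (polTraj A B π x0 w t) +
      B.mulVec (π t (fun s => w s)) + w t

/-- `x0` is robustly feasible over horizon `T`: there exist causal policies
`π_t : 𝒲^t → 𝒰` such that for every disturbance realization in `𝒲^T`, the
trajectory satisfies `x_t ∈ 𝒳` for `t < T` and `x_T ∈ 𝒳_T`. -/
def RobustFeas {n p : ℕ} (A : Matrix (Fin n) (Fin n) ℝ) (B : Matrix (Fin n) (Fin p) ℝ)
    (𝒳 : Set (Fin n → ℝ)) (𝒰 : Set (Fin p → ℝ)) (𝒲 : Set (Fin n → ℝ))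
    (𝒳T : Set (Fin n → ℝ)) (T : ℕ) (x0 : Fin n → ℝ) : Prop :=
  ∃ π : (t : ℕ) → (Fin t → (Fin n → ℝ)) → (Fin p → ℝ),
    (∀ t, t < T → ∀ ws : Fin t → (Fin n → ℝ), (∀ s, ws s ∈ 𝒲) → π t ws ∈ 𝒰) ∧
    ∀ w : ℕ → Fin n → ℝ, (∀ t, w t ∈ 𝒲) →
      (∀ t, t < T → polTraj A B π x0 w t ∈ 𝒳) ∧ polTraj A B π x0 w T ∈ 𝒳T

lemma polTraj_congr {n p : ℕ} (A : Matrix (Fin n) (Fin n) ℝ)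
    (B : Matrix (Fin n) (Fin p) ℝ)
    (π : (t : ℕ) → (Fin t → (Fin n → ℝ)) → (Fin p → ℝ))
    (x0 : Fin n → ℝ) (w₁ w₂ : ℕ → Fin n → ℝ) :
    ∀ t, (∀ s, s < t → w₁ s = w₂ s) →
      polTraj A B π x0 w₁ t = polTraj A B π x0 w₂ t := by
  intro t
  induction t with
  | zero => intro _; rfl
  | succ t ih =>
    intro h
    have h1 : (fun s : Fin t => w₁ s) = fun s : Fin t => w₂ s := by
      funext s; exact h s (s.isLt.trans (Nat.lt_succ_self t))
    simp only [polTraj, ih (fun s hs => h s (hs.trans (Nat.lt_succ_self t))), h1,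
      h t (Nat.lt_succ_self t)]

/-- robust recursive feasibility with a robust-control-invariant
terminal set — if `x₀` is robustly feasible over horizon `T ≥ 1` via policies
`π`, then for every disturbance `wbar ∈ 𝒲` the successor state
`x₁ := A x₀ + B π₀ + wbar` is robustly feasible over horizon `T`. -/
theorem robust_recursive_feasibility {n p : ℕ}
    (A : Matrix (Fin n) (Fin n) ℝ) (B : Matrix (Fin n) (Fin p) ℝ)
    (𝒳 : Set (Fin n → ℝ)) (𝒰 : Set (Fin p → ℝ)) (𝒲 : Set (Fin n → ℝ))
    (𝒳T : Set (Fin n → ℝ)) (h𝒳T : 𝒳T ⊆ 𝒳)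
    (hRCI : ∀ x ∈ 𝒳T, ∃ u ∈ 𝒰, ∀ w ∈ 𝒲, A.mulVec x + B.mulVec u + w ∈ 𝒳T)
    (T : ℕ) (hT : 1 ≤ T) (x0 : Fin n → ℝ)
    (π : (t : ℕ) → (Fin t → (Fin n → ℝ)) → (Fin p → ℝ))
    (hπU : ∀ t, t < T → ∀ ws : Fin t → (Fin n → ℝ), (∀ s, ws s ∈ 𝒲) → π t ws ∈ 𝒰)
    (hπfeas : ∀ w : ℕ → Fin n → ℝ, (∀ t, w t ∈ 𝒲) →
      (∀ t, t < T → polTraj A B π x0 w t ∈ 𝒳) ∧ polTraj A B π x0 w T ∈ 𝒳T) :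
    ∀ wbar ∈ 𝒲, RobustFeas A B 𝒳 𝒰 𝒲 𝒳T T
      (A.mulVec x0 + B.mulVec (π 0 Fin.elim0) + wbar) := by
  intro wbar hwbar
  obtain ⟨T', rfl⟩ : ∃ T', T = T' + 1 := ⟨T - 1, (Nat.succ_pred_eq_of_pos hT).symm⟩
  classical
  set x1 : Fin n → ℝ := A.mulVec x0 + B.mulVec (π 0 Fin.elim0) + wbar with hx1
  -- choice of terminal control
  let u_of : (Fin n → ℝ) → (Fin p → ℝ) := fun x =>
    if h : x ∈ 𝒳T then (hRCI x h).choose else π 0 Fin.elim0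
  have u_of_spec : ∀ x, x ∈ 𝒳T → u_of x ∈ 𝒰 ∧
      ∀ w ∈ 𝒲, A.mulVec x + B.mulVec (u_of x) + w ∈ 𝒳T := by
    intro x hx
    have : u_of x = (hRCI x hx).choose := by simp [u_of, hx]
    rw [this]
    obtain ⟨hu, hinv⟩ := (hRCI x hx).choose_spec
    exact ⟨hu, hinv⟩
  -- extension of a finite disturbance sequence
  let ext : (t : ℕ) → (Fin t → (Fin n → ℝ)) → ℕ → Fin n → ℝ := fun t ws s =>
    if h : s < t + 1 then (Fin.cons wbar ws : Fin (t+1) → Fin n → ℝ) ⟨s, h⟩ else wbar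
  have ext_mem : ∀ (t : ℕ) (ws : Fin t → (Fin n → ℝ)), (∀ s, ws s ∈ 𝒲) →
      ∀ s, ext t ws s ∈ 𝒲 := by
    intro t ws hws s
    simp only [ext]
    split
    · rename_i h
      cases s with
      | zero =>
        have h0 : (⟨0, h⟩ : Fin (t + 1)) = 0 := rfl
        rw [h0, Fin.cons_zero]; exact hwbar
      | succ k =>
        have h0 : (⟨k + 1, h⟩ : Fin (t + 1)) = Fin.succ ⟨k, by omega⟩ := rfl
        rw [h0, Fin.cons_succ]; exact hws _
    · exact hwbar
  -- the shifted policy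
  let π' : (t : ℕ) → (Fin t → (Fin n → ℝ)) → (Fin p → ℝ) := fun t ws =>
    if h : t + 1 < T' + 1 then π (t + 1) (Fin.cons wbar ws)
    else u_of (polTraj A B π x0 (ext t ws) (t + 1))
  refine ⟨π', ?_, ?_⟩
  · -- controls are admissible
    intro t ht ws hws
    by_cases h : t + 1 < T' + 1
    · have : π' t ws = π (t + 1) (Fin.cons wbar ws) := dif_pos h
      rw [this]
      apply hπU (t + 1) h
      intro s
      refine Fin.cases ?_ ?_ s
      · simpa using hwbar
      · intro i; simpa using hws i
    · have ht' : t = T' := by omega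
      have : π' t ws = u_of (polTraj A B π x0 (ext t ws) (t + 1)) := dif_neg h
      rw [this]
      subst ht'
      have hmem := hπfeas (ext t ws) (ext_mem t ws hws)
      exact (u_of_spec _ hmem.2).1
  · -- feasibility of trajectories
    intro w hw
    -- prepended disturbance
    set w' : ℕ → Fin n → ℝ := fun s => Nat.casesOn s wbar w with hw'
    have hw'mem : ∀ t, w' t ∈ 𝒲 := by
      intro t; cases t with
      | zero => exact hwbar
      | succ s => exact hw s
    -- shift lemma
    have shift : ∀ t, t ≤ T' → polTraj A B π' x1 w t = polTraj A B π x0 w' (t + 1) := by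
      intro t
      induction t with
      | zero =>
        intro _
        have h0 : (fun s : Fin 0 => w' (s : ℕ)) = Fin.elim0 := funext fun s => s.elim0
        simp only [polTraj, h0]
        exact hx1
      | succ t ih =>
        intro ht
        have htT : t ≤ T' := Nat.le_of_succ_le ht
        have hb : t + 1 < T' + 1 := by omega
        have hπ't : π' t (fun s : Fin t => w s) =
            π (t + 1) (Fin.cons wbar (fun s : Fin t => w s)) := dif_pos hb
        have hcons : (Fin.cons wbar (fun s : Fin t => w (s : ℕ)) : Fin (t+1) → Fin n → ℝ)
            = (fun s : Fin (t + 1) => w' (s : ℕ)) := by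
          funext s
          refine Fin.cases ?_ ?_ s
          · rw [Fin.cons_zero]; rfl
          · intro i; rw [Fin.cons_succ]; rfl
        simp only [polTraj]
        rw [ih htT, hπ't, hcons]
        rfl
    have hfeas := hπfeas w' hw'mem
    constructor
    · intro t ht
      have htT : t ≤ T' := by omega
      rw [shift t htT]
      rcases lt_or_eq_of_le (Nat.succ_le_succ htT) with h | h
      · exact hfeas.1 (t + 1) h
      · have : t + 1 = T' + 1 := by omega
        rw [this]
        exact h𝒳T hfeas.2
    · -- terminal condition
      have hstep : polTraj A B π' x1 w (T' + 1)
          = A.mulVec (polTraj A B π' x1 w T')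
            + B.mulVec (π' T' (fun s : Fin T' => w s)) + w T' := rfl
      have hxT : polTraj A B π' x1 w T' = polTraj A B π x0 w' (T' + 1) :=
        shift T' le_rfl
      have hxTmem : polTraj A B π x0 w' (T' + 1) ∈ 𝒳T := hfeas.2
      have hπ'T : π' T' (fun s : Fin T' => w s)
          = u_of (polTraj A B π x0 (ext T' (fun s : Fin T' => w s)) (T' + 1)) :=
        dif_neg (by omega)
      have hagree : polTraj A B π x0 (ext T' (fun s : Fin T' => w s)) (T' + 1)
          = polTraj A B π x0 w' (T' + 1) := by
        apply polTraj_congr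
        intro s hs
        simp only [ext]
        rw [dif_pos hs]
        cases s with
        | zero =>
          have h0 : (⟨0, hs⟩ : Fin (T' + 1)) = 0 := rfl
          rw [h0, Fin.cons_zero]; rfl
        | succ k =>
          have h0 : (⟨k + 1, hs⟩ : Fin (T' + 1)) = Fin.succ ⟨k, by omega⟩ := rfl
          rw [h0, Fin.cons_succ]
      rw [hstep, hxT, hπ'T, hagree]
      exact (u_of_spec _ hxTmem).2 (w T') (hw T')
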